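/- arXiv:1903.08897 — 4 statements merged into one kernel-verified Lean document; each statement's English description precedes it below -/
import Mathlib

section
/- (Theorem 2.1) Let H, J, K be 4×4 real matrices satisfying the Hamiltonian conditions H² = J² = K² = HJK = −E, with associated block map P. For any quaternion matrix A ∈ ℍ^{m×n} with m ≥ n ≥ 1, there exists a nonnegative integer s with 0 ≤ s ≤ n such that the rank of the 4m×4n real matrix P(A) equals 4s. In particular, 4 divides rank(P(A)) and rank(P(A)) ≤ 4n. -/
/-!
Hamilton's relations make `Q` an `ℝ`-algebra map `ρ : ℍ → M₄(ℝ)`. For any nonzero `v ∈ ℝ⁴`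
the orbit map `u ↦ ρ(u) v` is injective (apply `ρ(u⁻¹)`), hence an isomorphism `ℍ ≅ ℝ⁴`
intertwining left multiplication with `ρ`. Blockwise, it conjugates `P(A)` to `w ↦ A w` on
`ℍⁿ → ℍᵐ`. That map is right `ℍ`-linear, so its image is a right `ℍ`-vector space, whose real
dimension is four times its quaternionic dimension.
-/

open Matrix

/-- The real `4×4` matrix representation of a quaternion determined by matrices
`H, J, K` (assumed to satisfy the Hamiltonian conditions). -/
noncomputable def qRep (H J K : Matrix (Fin 4) (Fin 4) ℝ) (q : Quaternion ℝ) :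
    Matrix (Fin 4) (Fin 4) ℝ :=
  q.re • (1 : Matrix (Fin 4) (Fin 4) ℝ) + q.imI • H + q.imJ • J + q.imK • K

/-- The block real matrix representation of a quaternion matrix: the `(s,t)` block
of `pRep H J K A` is `qRep H J K (A s t)`. -/
noncomputable def pRep (H J K : Matrix (Fin 4) (Fin 4) ℝ) {m n : ℕ}
    (A : Matrix (Fin m) (Fin n) (Quaternion ℝ)) :
    Matrix (Fin m × Fin 4) (Fin n × Fin 4) ℝ :=
  Matrix.of fun p q => qRep H J K (A p.1 q.1) p.2 q.2

open Module
open scoped Quaternion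

section Hamilton

variable {A : Type*} [Ring A] {h j k : A}

theorem mul_eq_of_hamilton (hk : k * k = -1) (hhjk : h * j * k = -1) : h * j = k := by
  simpa [mul_assoc, hk] using congrArg (· * k) hhjk

theorem mul_eq_neg_of_hamilton (hh : h * h = -1) (hj : j * j = -1) (hk : k * k = -1)
    (hhjk : h * j * k = -1) : j * h = -k := by
  have hhj := mul_eq_of_hamilton hk hhjk
  have hjhj : j * h * j = h := by
    have := congrArg (h * ·) (hhj ▸ hk : h * j * (h * j) = -1)
    simpa only [← mul_assoc, hh, neg_one_mul, one_mul, neg_mul, mul_neg_one, neg_inj] using this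
  have := congrArg (· * j) hjhj
  rw [mul_assoc (j * h), hj, hhj, mul_neg_one] at this
  exact neg_eq_iff_eq_neg.mp this

/-- `ℍ[R]` is `ℍ[R, -1, 0, -1]`, so Hamilton's relations give a quaternion basis for it. -/
def hamiltonBasis (R : Type*) [CommRing R] [Algebra R A] (hh : h * h = -1) (hj : j * j = -1)
    (hk : k * k = -1) (hhjk : h * j * k = -1) : QuaternionAlgebra.Basis A (-1 : R) 0 (-1) where
  i := h
  j := j
  k := k
  i_mul_i := by rw [hh, zero_smul, add_zero, neg_one_smul]
  j_mul_j := by rw [hj, neg_one_smul]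
  i_mul_j := mul_eq_of_hamilton hk hhjk
  j_mul_i := by rw [mul_eq_neg_of_hamilton hh hj hk hhjk, zero_smul, zero_sub]

end Hamilton

theorem exists_linearEquiv_mulVec_eq {F D n : Type*} [Field F] [DivisionRing D] [Algebra F D]
    [FiniteDimensional F D] [Fintype n] [DecidableEq n] [Nonempty n]
    (ρ : D →ₐ[F] Matrix n n F) (hdim : finrank F D = Fintype.card n) :
    ∃ e : D ≃ₗ[F] (n → F), ∀ a u, ρ a *ᵥ e u = e (a * u) := by
  obtain ⟨v, hv⟩ := exists_ne (0 : n → F)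
  let orbit : D →ₗ[F] (n → F) :=
    { toFun := fun u => ρ u *ᵥ v
      map_add' := fun _ _ => by rw [map_add, add_mulVec]
      map_smul' := fun _ _ => by rw [map_smul, smul_mulVec, RingHom.id_apply] }
  have hinj : Function.Injective orbit := by
    refine (injective_iff_map_eq_zero orbit).mpr fun u hu => ?_
    by_contra hu0
    apply hv
    calc v = ρ (u⁻¹ * u) *ᵥ v := by rw [inv_mul_cancel₀ hu0, map_one, one_mulVec]
      _ = ρ u⁻¹ *ᵥ orbit u := by rw [map_mul, ← mulVec_mulVec]; rfl
      _ = 0 := by rw [hu, mulVec_zero]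
  refine ⟨orbit.linearEquivOfInjective hinj (by simpa using hdim), fun a u => ?_⟩
  simp [orbit, mulVec_mulVec]

def blockEquiv {R D ι κ : Type*} [CommSemiring R] [AddCommMonoid D] [Module R D]
    (e : D ≃ₗ[R] (κ → R)) : (ι → D) ≃ₗ[R] (ι × κ → R) :=
  (LinearEquiv.piCongrRight fun _ => e).trans (LinearEquiv.curry R R ι κ).symm

section QuaternionRepresentation

variable {H J K : Matrix (Fin 4) (Fin 4) ℝ}

noncomputable def qRepAlgHom (hH : H * H = -1) (hJ : J * J = -1) (hK : K * K = -1)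
    (hHJK : H * J * K = -1) : ℍ[ℝ] →ₐ[ℝ] Matrix (Fin 4) (Fin 4) ℝ :=
  QuaternionAlgebra.lift (hamiltonBasis ℝ hH hJ hK hHJK)

theorem qRepAlgHom_apply (hH : H * H = -1) (hJ : J * J = -1) (hK : K * K = -1)
    (hHJK : H * J * K = -1) (q : ℍ[ℝ]) : qRepAlgHom hH hJ hK hHJK q = qRep H J K q := by
  change QuaternionAlgebra.Basis.lift _ q = _
  simp [QuaternionAlgebra.Basis.lift, qRep, hamiltonBasis, Algebra.algebraMap_eq_smul_one]

theorem pRep_mulVec_blockEquiv {m n : ℕ} (e : ℍ[ℝ] ≃ₗ[ℝ] (Fin 4 → ℝ))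
    (he : ∀ a u, qRep H J K a *ᵥ e u = e (a * u)) (A : Matrix (Fin m) (Fin n) ℍ[ℝ])
    (w : Fin n → ℍ[ℝ]) : pRep H J K A *ᵥ blockEquiv e w = blockEquiv e (A *ᵥ w) := by
  ext ⟨s, l⟩
  have := fun t => congrFun (he (A s t) (w t)) l
  simp only [mulVec, dotProduct, pRep, of_apply, blockEquiv, LinearEquiv.trans_apply,
    LinearEquiv.coe_curry_symm, Fintype.sum_prod_type, Function.uncurry_apply_pair,
    LinearEquiv.piCongrRight_apply, map_sum, Finset.sum_apply] at this ⊢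
  simp only [this]

theorem rank_pRep_eq_finrank_range {m n : ℕ} (e : ℍ[ℝ] ≃ₗ[ℝ] (Fin 4 → ℝ))
    (he : ∀ a u, qRep H J K a *ᵥ e u = e (a * u)) (A : Matrix (Fin m) (Fin n) ℍ[ℝ]) :
    (pRep H J K A).rank = finrank ℝ (LinearMap.range (mulVecBilin ℝ ℍ[ℝ]ᵐᵒᵖ A)) := by
  have hconj : (pRep H J K A).mulVecLin = (blockEquiv e).toLinearMap ∘ₗ
      ((mulVecBilin ℝ ℍ[ℝ]ᵐᵒᵖ A).restrictScalars ℝ) ∘ₗ (blockEquiv e).symm.toLinearMap := by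
    refine LinearMap.ext fun x => ?_
    obtain ⟨w, rfl⟩ := (blockEquiv e).surjective x
    simp [pRep_mulVec_blockEquiv e he]
  rw [Matrix.rank, hconj, LinearMap.range_comp, LinearMap.range_comp_of_range_eq_top _
    (LinearEquiv.range _), LinearMap.range_restrictScalars, LinearEquiv.finrank_map_eq]
  rfl

end QuaternionRepresentation

theorem pRep_rank_general (H J K : Matrix (Fin 4) (Fin 4) ℝ)
    (hH : H * H = -1) (hJ : J * J = -1) (hK : K * K = -1)
    (hHJK : H * J * K = -1) {m n : ℕ}
    (A : Matrix (Fin m) (Fin n) (Quaternion ℝ)) :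
    ∃ s : ℕ, s ≤ n ∧ (pRep H J K A).rank = 4 * s := by
  obtain ⟨e, he⟩ := exists_linearEquiv_mulVec_eq (qRepAlgHom hH hJ hK hHJK)
    (by rw [Quaternion.finrank_eq_four, Fintype.card_fin])
  simp only [qRepAlgHom_apply] at he
  have hrank : (pRep H J K A).rank =
      4 * finrank ℍ[ℝ]ᵐᵒᵖ (LinearMap.range (mulVecBilin ℝ ℍ[ℝ]ᵐᵒᵖ A)) := by
    rw [rank_pRep_eq_finrank_range e he, ← finrank_mul_finrank ℝ ℍ[ℝ]ᵐᵒᵖ, MulOpposite.finrank,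
      Quaternion.finrank_eq_four]
  refine ⟨_, ?_, hrank⟩
  have hwidth := (pRep H J K A).rank_le_card_width
  rw [hrank, Fintype.card_prod, Fintype.card_fin, Fintype.card_fin] at hwidth
  omega

/-- Theorem 2.1: for `A ∈ ℍ^{m×n}` with `m ≥ n ≥ 1`, the rank of
`P(A)` equals `4s` for some `0 ≤ s ≤ n`. -/
theorem pRep_rank (H J K : Matrix (Fin 4) (Fin 4) ℝ)
    (hH : H * H = -1) (hJ : J * J = -1) (hK : K * K = -1)
    (hHJK : H * J * K = -1) {m n : ℕ} (hn : 1 ≤ n) (hmn : n ≤ m)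
    (A : Matrix (Fin m) (Fin n) (Quaternion ℝ)) :
    ∃ s : ℕ, s ≤ n ∧ (pRep H J K A).rank = 4 * s :=
  pRep_rank_general H J K hH hJ hK hHJK A
end

section
/- (Theorem 3.2) Let λ ∈ ℍ be a left eigenvalue of A ∈ ℍ^{m×m}, and let a, b ∈ ℍ be nonzero quaternions. Then aλb is a left eigenvalue of the matrix aAb, where aAb ∈ ℍ^{m×m} is the matrix with entries (aAb)_{st} = a · a_{st} · b. -/
open Matrix

/-- `λ` is a left eigenvalue of `A` if `A v = λ v` for some nonzero `v`. -/
def IsLeftEigenvalue {m : ℕ} (A : Matrix (Fin m) (Fin m) (Quaternion ℝ))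
    (l : Quaternion ℝ) : Prop :=
  ∃ v : Fin m → Quaternion ℝ, v ≠ 0 ∧ A.mulVec v = l • v

/-- `λ` is a right eigenvalue of `A` if `A v = v λ` for some nonzero `v`. -/
def IsRightEigenvalue {m : ℕ} (A : Matrix (Fin m) (Fin m) (Quaternion ℝ))
    (l : Quaternion ℝ) : Prop :=
  ∃ v : Fin m → Quaternion ℝ, v ≠ 0 ∧ A.mulVec v = fun s => v s * l

/-- Theorem 3.2: if `λ` is a left eigenvalue of `A` and `a, b`
are nonzero quaternions, then `aλb` is a left eigenvalue of `aAb`. -/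
theorem left_eigenvalue_mul_left_right {m : ℕ}
    (A : Matrix (Fin m) (Fin m) (Quaternion ℝ)) (l : Quaternion ℝ)
    (hl : IsLeftEigenvalue A l) (a b : Quaternion ℝ) (ha : a ≠ 0) (hb : b ≠ 0) :
    IsLeftEigenvalue (Matrix.of fun s t => a * A s t * b) (a * l * b) := by
  obtain ⟨v, hv, hAv⟩ := hl
  refine ⟨fun s => b⁻¹ * v s, ?_, ?_⟩
  · intro h
    apply hv
    funext s
    have := congrFun h s
    simp only [Pi.zero_apply] at this ⊢
    have : b * (b⁻¹ * v s) = b * 0 := by rw [this]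
    rwa [← mul_assoc, mul_inv_cancel₀ hb, one_mul, mul_zero] at this
  · funext s
    have hs := congrFun hAv s
    simp only [mulVec, dotProduct, of_apply, Pi.smul_apply, smul_eq_mul] at hs ⊢
    calc ∑ t, a * A s t * b * (b⁻¹ * v t)
        = ∑ t, a * (A s t * v t) := by
          refine Finset.sum_congr rfl fun t _ => ?_
          rw [mul_assoc (a * A s t), ← mul_assoc b, mul_inv_cancel₀ hb, one_mul, mul_assoc]
      _ = a * ∑ t, A s t * v t := by rw [Finset.mul_sum]
      _ = a * (l * v s) := by rw [hs]
      _ = a * l * b * (b⁻¹ * v s) := by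
          rw [mul_assoc (a * l), ← mul_assoc b, mul_inv_cancel₀ hb, one_mul, mul_assoc]
end

section
/- (Example 4.1) Let A ∈ ℍ^{2×2} be the matrix with rows (1, k) and (k, 1). Then the set of left eigenvalues of A is exactly {1 + k, 1 − k}. -/
/-!
Writing `μ = λ - 1`, the equation `A v = λ v` says `μ v₀ = k v₁` and `μ v₁ = k v₀`. Hence
`μ k μ v₁ = μ k k v₀ = -μ v₀ = -k v₁`, and `v₁ ≠ 0` (otherwise `k v₀ = 0` as well), so
`μ k μ = -k`. Comparing coordinates, this forces `μ = ±k`; conversely `(1, 1)` and `(1, -1)`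
are eigenvectors for `1 + k` and `1 - k`.
-/

open Matrix

section Ring

variable {R : Type*} [Ring R]

theorem mulVec_fin_two_symm_eq_smul_iff (u l : R) (v : Fin 2 → R) :
    !![1, u; u, 1] *ᵥ v = l • v ↔ (l - 1) * v 0 = u * v 1 ∧ (l - 1) * v 1 = u * v 0 := by
  simp only [mulVec_fin_two, funext_iff, Fin.forall_fin_two, of_apply, cons_val', cons_val_zero,
    cons_val_one, empty_val', cons_val_fin_one, Pi.smul_apply, smul_eq_mul, sub_mul, one_mul,
    sub_eq_iff_eq_add']
  rw [eq_comm, add_comm (v 1), eq_comm (a := l * v 1)]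

theorem mulVec_fin_two_symm_one_one (u : R) :
    !![1, u; u, 1] *ᵥ ![1, 1] = (1 + u) • ![1, 1] := by
  rw [mulVec_fin_two_symm_eq_smul_iff]
  simp

theorem mulVec_fin_two_symm_one_neg_one (u : R) :
    !![1, u; u, 1] *ᵥ ![1, -1] = (1 - u) • ![1, -1] := by
  rw [mulVec_fin_two_symm_eq_smul_iff]
  simp

theorem sub_one_mul_mul_sub_one_eq_neg_of_mulVec_eq_smul [NoZeroDivisors R] {u l : R}
    {v : Fin 2 → R} (hu : u * u = -1) (hv : v ≠ 0) (h : !![1, u; u, 1] *ᵥ v = l • v) :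
    (l - 1) * u * (l - 1) = -u := by
  obtain ⟨h0, h1⟩ := (mulVec_fin_two_symm_eq_smul_iff u l v).1 h
  have hv1 : v 1 ≠ 0 := by
    intro hv1
    have hv0 : v 0 = 0 := by
      rw [← neg_eq_zero, ← neg_one_mul, ← hu, mul_assoc, ← h1, hv1, mul_zero, mul_zero]
    exact hv (funext <| Fin.forall_fin_two.2 ⟨hv0, hv1⟩)
  have key : ((l - 1) * u * (l - 1)) * v 1 = -u * v 1 :=
    calc ((l - 1) * u * (l - 1)) * v 1 = (l - 1) * (u * u) * v 0 := by
          rw [mul_assoc, h1]; noncomm_ring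
      _ = -u * v 1 := by simp only [hu, mul_neg_one, neg_mul, h0]
  exact mul_right_cancel₀ hv1 key

end Ring

namespace Quaternion

variable {R : Type*} [CommRing R]

theorem k_mul_k : (⟨0, 0, 0, 1⟩ : ℍ[R]) * ⟨0, 0, 0, 1⟩ = -1 := by
  ext <;> simp

theorem eq_k_or_eq_neg_k_of_mul_k_mul_eq_neg_k [LinearOrder R] [IsStrictOrderedRing R]
    {μ : ℍ[R]} (h : μ * ⟨0, 0, 0, 1⟩ * μ = -⟨0, 0, 0, 1⟩) :
    μ = ⟨0, 0, 0, 1⟩ ∨ μ = -⟨0, 0, 0, 1⟩ := by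
  set k : ℍ[R] := ⟨0, 0, 0, 1⟩
  have k_coords : k.re = 0 ∧ k.imI = 0 ∧ k.imJ = 0 ∧ k.imK = 1 := ⟨rfl, rfl, rfl, rfl⟩
  simp only [Quaternion.ext_iff, re_mul, imI_mul, imJ_mul, imK_mul, re_neg, imI_neg, imJ_neg,
    imK_neg, k_coords, neg_zero] at h ⊢
  -- `μ k μ = -2ad - 2bd i - 2cd j + (a² + b² + c² - d²) k` for `μ = a + b i + c j + d k`
  obtain ⟨hre, hi, hj, hk⟩ := h
  have hd : μ.imK ≠ 0 := by
    intro hd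
    rw [hd] at hk
    nlinarith [mul_self_nonneg μ.re, mul_self_nonneg μ.imI, mul_self_nonneg μ.imJ]
  have h2d : 2 * μ.imK ≠ 0 := mul_ne_zero two_ne_zero hd
  have ha : μ.re = 0 :=
    (mul_eq_zero.1 (by linear_combination -hre : μ.re * (2 * μ.imK) = 0)).resolve_right h2d
  have hb : μ.imI = 0 :=
    (mul_eq_zero.1 (by linear_combination -hi : μ.imI * (2 * μ.imK) = 0)).resolve_right h2d
  have hc : μ.imJ = 0 :=
    (mul_eq_zero.1 (by linear_combination -hj : μ.imJ * (2 * μ.imK) = 0)).resolve_right h2d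
  have hd2 : (μ.imK - 1) * (μ.imK + 1) = 0 := by
    rw [ha, hb, hc] at hk
    linear_combination -hk
  rcases mul_eq_zero.1 hd2 with hd1 | hd1
  · exact .inl ⟨ha, hb, hc, sub_eq_zero.1 hd1⟩
  · exact .inr ⟨ha, hb, hc, eq_neg_of_add_eq_zero_left hd1⟩

end Quaternion

/-- Example 4.1: the left eigenvalues of `[[1, k], [k, 1]]` are
exactly `1 + k` and `1 − k`. -/
theorem example_4_1 :
    {l : Quaternion ℝ |
        IsLeftEigenvalue
          (!![1, (⟨0, 0, 0, 1⟩ : Quaternion ℝ); (⟨0, 0, 0, 1⟩ : Quaternion ℝ), 1]) l} =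
      {1 + (⟨0, 0, 0, 1⟩ : Quaternion ℝ), 1 - (⟨0, 0, 0, 1⟩ : Quaternion ℝ)} := by
  ext l
  constructor
  · rintro ⟨v, hv, h⟩
    show l = 1 + _ ∨ l = 1 - _
    rcases Quaternion.eq_k_or_eq_neg_k_of_mul_k_mul_eq_neg_k
        (sub_one_mul_mul_sub_one_eq_neg_of_mulVec_eq_smul Quaternion.k_mul_k hv h) with hl | hl
    · exact .inl (sub_eq_iff_eq_add'.1 hl)
    · exact .inr ((sub_eq_iff_eq_add'.1 hl).trans (sub_eq_add_neg _ _).symm)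
  · rintro (rfl | rfl)
    · exact ⟨![1, 1], by simp, mulVec_fin_two_symm_one_one _⟩
    · exact ⟨![1, -1], by simp, mulVec_fin_two_symm_one_neg_one _⟩
end

section
/- (Example 4.3) Let A ∈ ℍ^{3×3} be the matrix with rows (k, 0, 1), (0, k, 0) and (1, 0, k). Then the set of left eigenvalues of A is exactly {k, 1 + k, −1 + k}. -/
/-!
The matrix is `k • 1 + J`, where `J` swaps the first and last coordinates. Although `k` is
not central, `k • 1` acts on a vector by left multiplication with `k`, so the left eigenvalues
are those of `J` shifted by `k`. Now `J v = μ v` means `v₃ = μ v₁`, `μ v₂ = 0`, `v₁ = μ v₃`: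
either `μ = 0`, or `v₂ = 0`, `v₁ ≠ 0` and `μ² v₁ = v₁`, whence `μ = ±1`.
-/

open Matrix

theorem isLeftEigenvalue_add_smul_one_iff {m : ℕ} (A : Matrix (Fin m) (Fin m) (Quaternion ℝ))
    (κ l : Quaternion ℝ) :
    IsLeftEigenvalue (A + κ • 1) l ↔ IsLeftEigenvalue A (l - κ) := by
  unfold IsLeftEigenvalue
  refine exists_congr fun v => and_congr_right fun _ => ?_
  rw [add_mulVec, smul_mulVec, one_mulVec, sub_smul, eq_sub_iff_add_eq]

theorem isLeftEigenvalue_swap_iff (μ : Quaternion ℝ) :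
    IsLeftEigenvalue !![0, 0, 1; 0, 0, 0; 1, 0, 0] μ ↔ μ = 0 ∨ μ = 1 ∨ μ = -1 := by
  constructor
  · rintro ⟨v, hv, hJv⟩
    have h0 : v 2 = μ * v 0 := by
      simpa [mulVec, dotProduct, Fin.sum_univ_three] using congrFun hJv 0
    have h1 : μ * v 1 = 0 := by
      simpa [mulVec, dotProduct, Fin.sum_univ_three] using congrFun hJv 1
    have h2 : v 0 = μ * v 2 := by
      simpa [mulVec, dotProduct, Fin.sum_univ_three] using congrFun hJv 2
    rcases mul_eq_zero.1 h1 with hμ | hv1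
    · exact Or.inl hμ
    have hv0 : v 0 ≠ 0 := fun hv0 => hv <| funext fun i => by
      fin_cases i <;> simp [hv0, hv1, h0]
    have hμμ : (μ * μ - 1) * v 0 = 0 := by
      rw [sub_mul, mul_assoc, ← h0, ← h2, one_mul, sub_self]
    exact Or.inr (mul_self_eq_one_iff.1 (sub_eq_zero.1 ((mul_eq_zero.1 hμμ).resolve_right hv0)))
  · rintro (rfl | rfl | rfl)
    · refine ⟨![0, 1, 0], Function.ne_iff.2 ⟨1, by simp⟩, ?_⟩
      ext i : 1
      fin_cases i <;> simp
    · refine ⟨![1, 0, 1], Function.ne_iff.2 ⟨0, by simp⟩, ?_⟩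
      ext i : 1
      fin_cases i <;> simp
    · refine ⟨![1, 0, -1], Function.ne_iff.2 ⟨0, by simp⟩, ?_⟩
      ext i : 1
      fin_cases i <;> simp

/-- Example 4.3: the left eigenvalues of
`[[k, 0, 1], [0, k, 0], [1, 0, k]]` are exactly `k`, `1 + k` and `−1 + k`. -/
theorem example_4_3 :
    {l : Quaternion ℝ |
        IsLeftEigenvalue
          (!![(⟨0, 0, 0, 1⟩ : Quaternion ℝ), 0, 1;
              0, (⟨0, 0, 0, 1⟩ : Quaternion ℝ), 0;
              1, 0, (⟨0, 0, 0, 1⟩ : Quaternion ℝ)]) l} =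
      {(⟨0, 0, 0, 1⟩ : Quaternion ℝ), 1 + (⟨0, 0, 0, 1⟩ : Quaternion ℝ),
        -1 + (⟨0, 0, 0, 1⟩ : Quaternion ℝ)} := by
  set K : Quaternion ℝ := ⟨0, 0, 0, 1⟩
  have hA : !![K, 0, 1; 0, K, 0; 1, 0, K] = !![0, 0, 1; 0, 0, 0; 1, 0, 0] + K • 1 := by
    ext i j : 1
    fin_cases i <;> fin_cases j <;> simp
  ext l
  rw [Set.mem_ofPred_eq, hA, isLeftEigenvalue_add_smul_one_iff, isLeftEigenvalue_swap_iff,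
    sub_eq_zero, sub_eq_iff_eq_add, sub_eq_iff_eq_add]
  rfl
end
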